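/- arXiv:1908.11515 — 2 statements merged into one kernel-verified Lean document; each statement's English description precedes it below -/
import Mathlib

section
/- Variance of the GRR frequency estimator: under the setup where n users report independently via GRR with truth probability p and lie probability q = (1-p)/(d-1), and f_v is the true frequency of v, the variance of the estimator f̃_v = (1/n)Σ_i (1[y_i=v]-q)/(p-q) equals q(1-q)/(n(p-q)²) + f_v(1-p-q)/(n(p-q)). -/
/- Independent reports make the variance of the mean the mean of the variances, scaled by `1/n`.
Each `1[y_i = v]` is Bernoulli with parameter `r_i = p` if `v_i = v` and `r_i = q` otherwise, so the
debiased report of user `i` has variance `r_i (1 - r_i) / (p - q)²`, and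
`p (1 - p) = q (1 - q) + (p - q) (1 - p - q)` splits this into a common term and a term counted
once per user holding `v`. -/

open MeasureTheory ProbabilityTheory

lemma ite_sub_div_eq_indicator_sub_mul {Ω β : Type*} [DecidableEq β] (Y : Ω → β) (b : β)
    (q c : ℝ) :
    (fun ω => ((if Y ω = b then 1 else 0) - q) / c)
      = fun ω => ({ω | Y ω = b}.indicator 1 ω - q) * c⁻¹ := by
  ext ω
  by_cases h : Y ω = b <;> simp [h, div_eq_mul_inv]

section

variable {Ω : Type*} [MeasurableSpace Ω] {μ : Measure Ω} [IsProbabilityMeasure μ]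

lemma variance_indicator_one {A : Set Ω} (hA : MeasurableSet A) :
    Var[A.indicator 1; μ] = μ.real A * (1 - μ.real A) := by
  have hmem : MemLp (A.indicator (1 : Ω → ℝ)) 2 μ :=
    memLp_indicator_const 2 hA 1 (Or.inr (measure_ne_top μ A))
  have hsq : A.indicator (1 : Ω → ℝ) ^ 2 = A.indicator 1 := by
    ext ω
    by_cases h : ω ∈ A <;> simp [h]
  rw [variance_eq_sub hmem, hsq, integral_indicator_one hA]
  ring

variable {β : Type*} [MeasurableSpace β] [MeasurableSingletonClass β] [DecidableEq β]
  {Y : Ω → β}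

lemma memLp_ite_sub_div (hY : Measurable Y) (b : β) (q c : ℝ) :
    MemLp (fun ω => ((if Y ω = b then 1 else 0) - q) / c) 2 μ := by
  rw [ite_sub_div_eq_indicator_sub_mul]
  exact ((memLp_indicator_const 2 (hY (measurableSet_singleton b)) 1
    (Or.inr (measure_ne_top μ _))).sub (memLp_const q)).mul_const c⁻¹

lemma variance_ite_sub_div (hY : Measurable Y) (b : β) (q c : ℝ) :
    Var[fun ω => ((if Y ω = b then 1 else 0) - q) / c; μ]
      = μ.real {ω | Y ω = b} * (1 - μ.real {ω | Y ω = b}) / c ^ 2 := by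
  have hA : MeasurableSet {ω | Y ω = b} := hY (measurableSet_singleton b)
  rw [ite_sub_div_eq_indicator_sub_mul, variance_mul_const, variance_sub_const
    (measurable_one.indicator hA).aestronglyMeasurable, variance_indicator_one hA,
    div_eq_mul_inv, inv_pow]

end

-- For `p = q` both sides are `0`, by `x / 0 = 0`.
lemma ite_mul_one_sub_ite_div_sq (P : Prop) [Decidable P] (p q : ℝ) :
    (if P then p else q) * (1 - if P then p else q) / (p - q) ^ 2
      = q * (1 - q) / (p - q) ^ 2 + (if P then 1 else 0) * ((1 - p - q) / (p - q)) := by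
  split_ifs
  · rcases eq_or_ne (p - q) 0 with h | h
    · simp [h]
    · field_simp
      ring
  · simp

theorem grr_estimator_variance_general {Ω D : Type*} [MeasurableSpace Ω] [MeasurableSpace D]
    [MeasurableSingletonClass D] [DecidableEq D]
    (μ : Measure Ω) [IsProbabilityMeasure μ]
    (n : ℕ)
    (p q : ℝ)
    (v : D) (vs : Fin n → D) (y : Fin n → Ω → D)
    (hmeas : ∀ i, Measurable (y i))
    (hindep : iIndepFun y μ)
    (hdist : ∀ i w, (μ {ω | y i ω = w}).toReal = if vs i = w then p else q) :
    variance (fun ω => ((1:ℝ)/n) * ∑ i, ((if y i ω = v then (1:ℝ) else 0) - q) / (p - q)) μ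
      = q * (1 - q) / (n * (p - q)^2)
        + ((1/n) * ∑ i, if vs i = v then (1:ℝ) else 0) * (1 - p - q) / (n * (p - q)) := by
  set X : Fin n → Ω → ℝ := fun i ω => ((if y i ω = v then 1 else 0) - q) / (p - q)
  have hX_indep : iIndepFun X μ :=
    hindep.comp (fun _ w => ((if w = v then 1 else 0) - q) / (p - q)) fun _ =>
      ((measurable_const.ite measurableSet_eq measurable_const).sub_const q).div_const _
  have hvar_sum : Var[fun ω => ∑ i, X i ω; μ] = ∑ i, Var[X i; μ] := by
    rw [← Finset.sum_fn]
    exact IndepFun.variance_sum (fun i _ => memLp_ite_sub_div (hmeas i) v q _)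
      fun i _ j _ hij => hX_indep.indepFun hij
  have hvar_user : ∀ i, Var[X i; μ]
      = q * (1 - q) / (p - q) ^ 2 + (if vs i = v then 1 else 0) * ((1 - p - q) / (p - q)) :=
    fun i => by
      rw [variance_ite_sub_div (hmeas i), measureReal_def, hdist, ite_mul_one_sub_ite_div_sq]
  rw [variance_const_mul, hvar_sum, Finset.sum_congr rfl fun i _ => hvar_user i,
    Finset.sum_add_distrib, ← Finset.sum_mul, Finset.sum_const, Finset.card_univ,
    Fintype.card_fin, nsmul_eq_mul]
  rcases eq_or_ne (n : ℝ) 0 with hn | hn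
  · simp [hn]
  · field_simp

theorem grr_estimator_variance {Ω D : Type*} [MeasurableSpace Ω] [MeasurableSpace D]
    [MeasurableSingletonClass D] [DecidableEq D]
    (μ : Measure Ω) [IsProbabilityMeasure μ]
    (n d : ℕ) (hn : 0 < n) (hd : 2 ≤ d) (hcard : Nat.card D = d)
    (p q : ℝ) (hq : q = (1 - p) / (d - 1)) (h0q : 0 < q) (hqp : q < p) (hp1 : p ≤ 1)
    (v : D) (vs : Fin n → D) (y : Fin n → Ω → D)
    (hmeas : ∀ i, Measurable (y i))
    (hindep : iIndepFun y μ)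
    (hdist : ∀ i w, (μ {ω | y i ω = w}).toReal = if vs i = w then p else q) :
    variance (fun ω => ((1:ℝ)/n) * ∑ i, ((if y i ω = v then (1:ℝ) else 0) - q) / (p - q)) μ
      = q * (1 - q) / (n * (p - q)^2)
        + ((1/n) * ∑ i, if vs i = v then (1:ℝ) else 0) * (1 - p - q) / (n * (p - q)) :=
  grr_estimator_variance_general μ n p q v vs y hmeas hindep hdist
end

section
/- Optimal hash domain size for shuffler-optimal local hashing: for fixed m > 1 and n > 0, the function Var(d') = m²/(n·(m - d')²·(d' - 1)) on the interval 1 < d' < m attains its minimum at d' = (m+2)/3, and this is the unique critical point in the interval. -/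
/-!
Write `p d = (m - d)² (d - 1)`, so that `Var = m² / (n p)`: minimising `Var` on `(1, m)` means
maximising `p`. AM-GM for the three factors `(m - d) / 2`, `(m - d) / 2`, `d - 1`, whose sum
`(m - 1)` does not depend on `d`, puts the maximum where they are equal, at `d = (m + 2) / 3`;
and `p' d = (m - d) (m + 2 - 3d)` vanishes in `(1, m)` only there.
-/

theorem eq_zero_of_hasDerivAt_of_deriv_const_div_eq_zero {𝕜 : Type*} [NontriviallyNormedField 𝕜]
    {f : 𝕜 → 𝕜} {f' x : 𝕜} {c : 𝕜} (hf : HasDerivAt f f' x) (hfx : f x ≠ 0) (hc : c ≠ 0)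
    (h : deriv (fun y => c / f y) x = 0) : f' = 0 := by
  rw [((hasDerivAt_const x c).fun_div hf hfx).deriv] at h
  simpa [hfx, hc] using h

theorem hasDerivAt_sq_sub_mul_sub_one (m x : ℝ) :
    HasDerivAt (fun d : ℝ => (m - d) ^ 2 * (d - 1)) ((m - x) * (m + 2 - 3 * x)) x := by
  refine ((((hasDerivAt_id' x).const_sub m).fun_pow 2).fun_mul
    ((hasDerivAt_id' x).sub_const 1)).congr_deriv ?_
  push_cast
  ring

theorem sq_sub_mul_sub_one_le (m d : ℝ) (hd : 3 * d ≤ 4 * m - 1) :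
    (m - d) ^ 2 * (d - 1) ≤ (m - (m + 2) / 3) ^ 2 * ((m + 2) / 3 - 1) := by
  linear_combination mul_nonneg (sq_nonneg (3 * d - m - 2)) (sub_nonneg.2 hd) / 27

theorem solh_optimal_d (m n : ℝ) (hm : 1 < m) (hn : 0 < n) :
    IsMinOn (fun d' : ℝ => m^2 / (n * (m - d')^2 * (d' - 1))) (Set.Ioo 1 m) ((m + 2) / 3) ∧
    ∀ x ∈ Set.Ioo (1:ℝ) m,
      deriv (fun d' : ℝ => m^2 / (n * (m - d')^2 * (d' - 1))) x = 0 → x = (m + 2) / 3 := by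
  have hpos : ∀ x ∈ Set.Ioo 1 m, 0 < n * (m - x) ^ 2 * (x - 1) := fun x ⟨h1, h2⟩ => by
    have := sub_pos.2 h1
    have := sub_pos.2 h2
    positivity
  constructor
  · intro x hx
    have hle := mul_le_mul_of_nonneg_left (sq_sub_mul_sub_one_le m x (by linarith [hx.2])) hn.le
    simp only [← mul_assoc] at hle
    exact div_le_div_of_nonneg_left (sq_nonneg m) (hpos x hx) hle
  · intro x hx hcrit
    have hg := (hasDerivAt_sq_sub_mul_sub_one m x).const_mul n
    simp only [← mul_assoc] at hg
    have hzero := eq_zero_of_hasDerivAt_of_deriv_const_div_eq_zero hg (hpos x hx).ne'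
      (pow_ne_zero 2 (by linarith)) hcrit
    rcases mul_eq_zero.1 hzero with hnx | hroot
    · linarith [(mul_eq_zero.1 hnx).resolve_left hn.ne', hx.2]
    · linarith
end
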